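/- Let G = (V, E) be a finite connected simple graph and let Ĝ be the multigraph constructed from G as follows, with M := 3|V| + 2|E| + 2. The vertices of Ĝ are: a node T; for every v ∈ V three nodes v, v', T_v; and for every edge e ∈ E with endpoints u and v, two nodes e_u and e_v. The edges of Ĝ are: for every edge e ∈ E with endpoints u and v, one edge between e_u and e_v, M parallel edges between u and e_u, and M parallel edges between e_v and v; and for every v ∈ V, three parallel edges between v' and T_v, M parallel edges between v and v', and M parallel edges between T_v and T. Then every divisor of positive rank on Ĝ has degree at least 4|V| + |E| + 1 − α(G); that is, dgon(Ĝ) ≥ 4|V| + |E| + 1 − α(G). -/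
import Mathlib


open Finset
open scoped Classical

variable {V : Type*}

/-- Laplacian of the multigraph with edge multiplicity function `m`, applied to `x`. -/
def lap [Fintype V] (m : V → V → ℕ) (x : V → ℤ) : V → ℤ :=
  fun u => (∑ w, (m u w : ℤ)) * x u - ∑ w, (m u w : ℤ) * x w

/-- A divisor is effective if it is nonnegative. -/
def Effective (D : V → ℤ) : Prop := ∀ v, 0 ≤ D v

/-- Linear equivalence of divisors. -/
def DivEquiv [Fintype V] (m : V → V → ℕ) (D D' : V → ℤ) : Prop :=
  ∃ x : V → ℤ, D - D' = lap m x

/-- Degree of a divisor. -/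
def divDeg [Fintype V] (D : V → ℤ) : ℤ := ∑ v, D v

/-- Indicator vector of a subset. -/
def indVec [DecidableEq V] (U : Finset V) : V → ℤ := fun v => if v ∈ U then 1 else 0

/-- The underlying graph of the multigraph is connected. -/
def Conn [Fintype V] (m : V → V → ℕ) : Prop :=
  (SimpleGraph.fromRel fun u v => m u v ≠ 0).Connected

/-- The equivalence relation `≡_D` on vertices. -/
def DEquiv [Fintype V] (m : V → V → ℕ) (D : V → ℤ) (u v : V) : Prop :=
  ∀ x : V → ℤ, Effective (D - lap m x) → x u = x v

/-- Rank of a divisor. -/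
noncomputable def divRank [Fintype V] (m : V → V → ℕ) (D : V → ℤ) : ℤ :=
  if ∃ D' : V → ℤ, DivEquiv m D D' ∧ Effective D' then
    sSup {k : ℤ | 0 ≤ k ∧ ∀ E : V → ℤ, Effective E → divDeg E ≤ k →
      ∃ D' : V → ℤ, DivEquiv m (D - E) D' ∧ Effective D'}
  else -1

/-- Gonality of the multigraph. -/
noncomputable def dgon (V : Type*) [Fintype V] (m : V → V → ℕ) : ℤ :=
  sInf {d : ℤ | ∃ D : V → ℤ, 1 ≤ divRank m D ∧ divDeg D = d}

/-- `S` is an independent set in the simple graph `G`. -/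
def IsIndepSet' (G : SimpleGraph V) (S : Finset V) : Prop :=
  ∀ u ∈ S, ∀ v ∈ S, ¬ G.Adj u v

/-- The independence number `α(G)`: the maximum size of an independent set in `G`. -/
noncomputable def alphaNum [Fintype V] (G : SimpleGraph V) : ℕ :=
  sSup {n : ℕ | ∃ S : Finset V, IsIndepSet' G S ∧ S.card = n}

/-- The vertex set of the graph `Ĝ` constructed from `G`:
`Sum.inl ()` is the node `T`;
`Sum.inr (Sum.inl v)` is the node `v`;
`Sum.inr (Sum.inr (Sum.inl v))` is the node `v'`;
`Sum.inr (Sum.inr (Sum.inr (Sum.inl v)))` is the node `T_v`;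
`Sum.inr (Sum.inr (Sum.inr (Sum.inr ⟨(u, w), h⟩)))` is the node `e_u` for the edge
`e = uw` of `G`. -/
abbrev HatV (G : SimpleGraph V) : Type _ :=
  Unit ⊕ V ⊕ V ⊕ V ⊕ {p : V × V // G.Adj p.1 p.2}

/-- The edge multiplicity function of the graph `Ĝ` constructed from `G`, with `M` the
multiplicity of the parallel classes: for every edge `e ∈ E(u,w)` there is one edge between
`e_u` and `e_w`, and `M` parallel edges between `u` and `e_u` (and between `e_w` and `w`);
for every `v ∈ V` there are three parallel edges between `v'` and `T_v`, `M` parallel edges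
between `v` and `v'`, and `M` parallel edges between `T_v` and `T`. -/
def hatM [DecidableEq V] (G : SimpleGraph V) (M : ℕ) : HatV G → HatV G → ℕ
  | Sum.inl _, Sum.inr (Sum.inr (Sum.inr (Sum.inl _))) => M
  | Sum.inr (Sum.inr (Sum.inr (Sum.inl _))), Sum.inl _ => M
  | Sum.inr (Sum.inr (Sum.inl v)), Sum.inr (Sum.inr (Sum.inr (Sum.inl w))) =>
      if v = w then 3 else 0
  | Sum.inr (Sum.inr (Sum.inr (Sum.inl w))), Sum.inr (Sum.inr (Sum.inl v)) =>
      if v = w then 3 else 0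
  | Sum.inr (Sum.inl v), Sum.inr (Sum.inr (Sum.inl w)) => if v = w then M else 0
  | Sum.inr (Sum.inr (Sum.inl w)), Sum.inr (Sum.inl v) => if v = w then M else 0
  | Sum.inr (Sum.inl u), Sum.inr (Sum.inr (Sum.inr (Sum.inr p))) =>
      if u = p.1.1 then M else 0
  | Sum.inr (Sum.inr (Sum.inr (Sum.inr p))), Sum.inr (Sum.inl u) =>
      if u = p.1.1 then M else 0
  | Sum.inr (Sum.inr (Sum.inr (Sum.inr p))), Sum.inr (Sum.inr (Sum.inr (Sum.inr q))) =>
      if p.1.1 = q.1.2 ∧ p.1.2 = q.1.1 then 1 else 0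
  | _, _ => 0

/-- The value `M := 3|V| + 2|E| + 2` used in the construction of `Ĝ`. -/
def bigM [Fintype V] [DecidableEq V] (G : SimpleGraph V) [DecidableRel G.Adj] : ℕ :=
  3 * Fintype.card V + 2 * G.edgeFinset.card + 2

set_option linter.unusedSectionVars false

/-! ### Generic lemmas about divisors on multigraphs -/

section Generic
variable {W : Type*} [Fintype W]

lemma lap_apply (m : W → W → ℕ) (x : W → ℤ) (a : W) :
    lap m x a = ∑ w, (m a w : ℤ) * (x a - x w) := by
  simp [lap, Finset.sum_mul, mul_sub, Finset.sum_sub_distrib]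

lemma lap_eq_zero_at (m : W → W → ℕ) (x : W → ℤ) (a : W)
    (h : ∀ w, m a w ≠ 0 → x w = x a) : lap m x a = 0 := by
  rw [lap_apply]
  apply Finset.sum_eq_zero
  intro w _
  by_cases hw : m a w = 0
  · simp [hw]
  · rw [h w hw]; ring

lemma lap_add (m : W → W → ℕ) (x y : W → ℤ) :
    lap m (x + y) = lap m x + lap m y := by
  funext a
  simp [lap, mul_add, Finset.sum_add_distrib]
  ring

lemma lap_neg (m : W → W → ℕ) (x : W → ℤ) : lap m (-x) = - lap m x := by
  funext a
  simp [lap, Finset.sum_neg_distrib]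
  ring

lemma lap_sub (m : W → W → ℕ) (x y : W → ℤ) :
    lap m (x - y) = lap m x - lap m y := by
  rw [sub_eq_add_neg, lap_add, lap_neg, sub_eq_add_neg]

lemma divDeg_sub (A B : W → ℤ) : divDeg (A - B) = divDeg A - divDeg B := by
  simp [divDeg, Finset.sum_sub_distrib]

lemma divDeg_lap (m : W → W → ℕ) (hsym : ∀ a b, m a b = m b a) (x : W → ℤ) :
    divDeg (lap m x) = 0 := by
  unfold divDeg
  simp_rw [lap_apply, mul_sub, Finset.sum_sub_distrib]
  rw [sub_eq_zero]
  rw [Finset.sum_comm]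
  apply Finset.sum_congr rfl
  intro a _
  apply Finset.sum_congr rfl
  intro w _
  rw [hsym]

lemma divDeg_eq_of_equiv (m : W → W → ℕ) (hsym : ∀ a b, m a b = m b a)
    {A B : W → ℤ} (h : DivEquiv m A B) : divDeg A = divDeg B := by
  obtain ⟨x, hx⟩ := h
  have := congrArg divDeg hx
  rw [divDeg_sub, divDeg_lap m hsym] at this
  linarith

lemma cut_lemma (m : W → W → ℕ) (hsym : ∀ a b, m a b = m b a) {D x : W → ℤ}
    (hD : Effective D) (hDx : Effective (D - lap m x)) {u v : W} (huv : x u < x v) :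
    (m u v : ℤ) ≤ divDeg D := by
  classical
  set A : Finset W := univ.filter (fun w => x v ≤ x w) with hA
  have hvA : v ∈ A := by simp [hA]
  have huA : u ∉ A := by simp [hA]; linarith
  have key : (m u v : ℤ) ≤ ∑ a ∈ A, lap m x a := by
    have hsplit : ∀ a : W, lap m x a =
        (∑ w ∈ A, (m a w : ℤ) * (x a - x w)) + ∑ w ∈ univ \ A, (m a w : ℤ) * (x a - x w) := by
      intro a
      rw [lap_apply, ← Finset.sum_filter_add_sum_filter_not univ (fun w => x v ≤ x w)]
      congr 1
      apply Finset.sum_congr _ (fun _ _ => rfl)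
      simp [hA, Finset.sdiff_eq_filter]
    simp_rw [hsplit, Finset.sum_add_distrib]
    have hzero : ∑ a ∈ A, ∑ w ∈ A, (m a w : ℤ) * (x a - x w) = 0 := by
      have h2 : ∑ a ∈ A, ∑ w ∈ A, (m a w : ℤ) * (x a - x w)
          = ∑ w ∈ A, ∑ a ∈ A, (m a w : ℤ) * (x a - x w) := Finset.sum_comm
      have h3 : ∑ w ∈ A, ∑ a ∈ A, (m a w : ℤ) * (x a - x w)
          = - ∑ a ∈ A, ∑ w ∈ A, (m a w : ℤ) * (x a - x w) := by
        rw [← Finset.sum_neg_distrib]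
        apply Finset.sum_congr rfl; intro a _
        rw [← Finset.sum_neg_distrib]
        apply Finset.sum_congr rfl; intro w _
        rw [hsym]; ring
      rw [h2] at h3 ⊢
      linarith
    rw [hzero, zero_add]
    have hterm : (m u v : ℤ) ≤ ∑ w ∈ univ \ A, (m v w : ℤ) * (x v - x w) := by
      have huin : u ∈ univ \ A := by simp [hA]; linarith
      have hstep : (m v u : ℤ) * 1 ≤ (m v u : ℤ) * (x v - x u) := by
        apply mul_le_mul_of_nonneg_left _ (by positivity)
        omega
      calc (m u v : ℤ) = (m v u : ℤ) * 1 := by rw [hsym]; ring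
        _ ≤ (m v u : ℤ) * (x v - x u) := hstep
        _ ≤ ∑ w ∈ univ \ A, (m v w : ℤ) * (x v - x w) := by
            apply Finset.single_le_sum _ huin
            intro w hw
            simp only [Finset.mem_sdiff, hA, Finset.mem_filter] at hw
            have h4 : x w < x v := by
              by_contra hc
              exact hw.2 ⟨Finset.mem_univ w, by linarith⟩
            have h5 : 0 ≤ x v - x w := by linarith
            positivity
    calc (m u v : ℤ) ≤ ∑ w ∈ univ \ A, (m v w : ℤ) * (x v - x w) := hterm
      _ ≤ ∑ a ∈ A, ∑ w ∈ univ \ A, (m a w : ℤ) * (x a - x w) := by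
          apply Finset.single_le_sum _ hvA
          intro a ha
          apply Finset.sum_nonneg
          intro w hw
          simp only [hA, Finset.mem_filter] at ha
          simp only [Finset.mem_sdiff, hA, Finset.mem_filter] at hw
          have hxw : x w < x v := by
            by_contra hc
            exact hw.2 ⟨Finset.mem_univ w, by linarith⟩
          have h6 : 0 ≤ x a - x w := by linarith [ha.2]
          positivity
  have hDA : ∑ a ∈ A, lap m x a ≤ ∑ a ∈ A, D a := by
    apply Finset.sum_le_sum
    intro a _
    have := hDx a
    simp only [Pi.sub_apply] at this
    linarith
  have hAD : ∑ a ∈ A, D a ≤ divDeg D := by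
    unfold divDeg
    apply Finset.sum_le_sum_of_subset_of_nonneg (Finset.subset_univ A)
    intro w _ _
    exact hD w
  linarith

lemma eq_of_lt_deg (m : W → W → ℕ) (hsym : ∀ a b, m a b = m b a) {D x : W → ℤ}
    (hD : Effective D) (hDx : Effective (D - lap m x)) {u v : W}
    (hlt : divDeg D < (m u v : ℤ)) : x u = x v := by
  by_contra hne
  rcases lt_or_gt_of_ne hne with h | h
  · have := cut_lemma m hsym hD hDx h
    linarith
  · have := cut_lemma m hsym hD hDx h
    rw [hsym] at this
    linarith

end Generic

/-! ### Extracting information from `1 ≤ divRank` -/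

section RankFacts
variable {W : Type*} [Fintype W] [Nonempty W]

lemma single_le_deg {E : W → ℤ} (hE : Effective E) (w : W) : E w ≤ divDeg E :=
  Finset.single_le_sum (fun v _ => hE v) (Finset.mem_univ w)

lemma rank_facts (m : W → W → ℕ) (hsym : ∀ a b, m a b = m b a) (D : W → ℤ)
    (h : 1 ≤ divRank m D) :
    ∃ D₀ : W → ℤ, Effective D₀ ∧ divDeg D₀ = divDeg D ∧
      ∀ s : W, ∃ x : W → ℤ, Effective (D₀ - indVec {s} - lap m x) := by
  classical
  by_cases hcond : ∃ D' : W → ℤ, DivEquiv m D D' ∧ Effective D'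
  swap
  · rw [divRank, if_neg hcond] at h; omega
  rw [divRank, if_pos hcond] at h
  set S : Set ℤ := {k : ℤ | 0 ≤ k ∧ ∀ E : W → ℤ, Effective E → divDeg E ≤ k →
      ∃ D' : W → ℤ, DivEquiv m (D - E) D' ∧ Effective D'} with hS
  have h0 : (0 : ℤ) ∈ S := by
    refine ⟨le_refl 0, fun E hE hdE => ?_⟩
    have hE0 : E = 0 := by
      funext v
      have h1 : E v ≤ divDeg E := single_le_deg hE v
      have := hE v
      simp only [Pi.zero_apply]
      omega
    rw [hE0]
    obtain ⟨D', hD'⟩ := hcond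
    exact ⟨D', by simpa using hD'.1, hD'.2⟩
  have hbdd : BddAbove S := by
    refine ⟨max (divDeg D) 0, fun k hk => ?_⟩
    rcases hk with ⟨hk0, hkE⟩
    set w0 : W := Classical.arbitrary W
    set E : W → ℤ := fun a => if a = w0 then k else 0 with hEdef
    have hEeff : Effective E := by
      intro v; simp only [hEdef]; split <;> omega
    have hEdeg : divDeg E = k := by
      simp [divDeg, hEdef, Finset.sum_ite_eq']
    obtain ⟨D', hequiv, heff⟩ := hkE E hEeff (le_of_eq hEdeg)
    have hdd : divDeg (D - E) = divDeg D' := divDeg_eq_of_equiv m hsym hequiv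
    rw [divDeg_sub, hEdeg] at hdd
    have : 0 ≤ divDeg D' := Finset.sum_nonneg (fun v _ => heff v)
    simp only [le_max_iff]
    left; omega
  have hmem : sSup S ∈ S := Int.csSup_mem ⟨0, h0⟩ hbdd
  obtain ⟨hknn, hk⟩ := hmem
  obtain ⟨D₀, ⟨x₀, hx₀⟩, hD₀eff⟩ := hcond
  refine ⟨D₀, hD₀eff, (divDeg_eq_of_equiv m hsym ⟨x₀, hx₀⟩).symm, fun s => ?_⟩
  set E : W → ℤ := indVec {s} with hEdef
  have hEeff : Effective E := by
    intro v; simp only [hEdef, indVec]; split <;> omega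
  have hEdeg : divDeg E = 1 := by
    simp [divDeg, hEdef, indVec, Finset.sum_ite_eq']
  obtain ⟨D'', ⟨x₁, hx₁⟩, heff''⟩ := hk E hEeff (by omega)
  refine ⟨x₁ - x₀, ?_⟩
  have hfin : D₀ - E - lap m (x₁ - x₀) = D'' := by
    rw [lap_sub]
    have h1 : lap m x₁ = D - E - D'' := hx₁.symm
    have h2 : lap m x₀ = D - D₀ := hx₀.symm
    rw [h1, h2]
    ext v
    simp only [Pi.sub_apply]
    ring
  rw [hfin]
  exact heff''

lemma rank_one_of_all_ones (m : W → W → ℕ) (hsym : ∀ a b, m a b = m b a) :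
    1 ≤ divRank m (fun _ => (1 : ℤ)) := by
  classical
  set D : W → ℤ := fun _ => (1 : ℤ) with hD
  have hDeff : Effective D := fun v => by simp [hD]
  have hlap0 : lap m 0 = 0 := by
    funext a; simp [lap]
  have hrefl : ∀ A : W → ℤ, DivEquiv m A A := by
    intro A; exact ⟨0, by simp [hlap0]⟩
  have hcond : ∃ D' : W → ℤ, DivEquiv m D D' ∧ Effective D' := ⟨D, hrefl D, hDeff⟩
  rw [divRank, if_pos hcond]
  apply le_csSup
  · refine ⟨Fintype.card W, fun k hk => ?_⟩
    rcases hk with ⟨hk0, hkE⟩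
    set w0 : W := Classical.arbitrary W
    set E : W → ℤ := fun a => if a = w0 then k else 0 with hEdef
    have hEeff : Effective E := by intro v; simp only [hEdef]; split <;> omega
    have hEdeg : divDeg E = k := by simp [divDeg, hEdef, Finset.sum_ite_eq']
    obtain ⟨D', hequiv, heff⟩ := hkE E hEeff (le_of_eq hEdeg)
    have hdd : divDeg (D - E) = divDeg D' := divDeg_eq_of_equiv m hsym hequiv
    rw [divDeg_sub, hEdeg] at hdd
    have h0 : 0 ≤ divDeg D' := Finset.sum_nonneg (fun v _ => heff v)
    have hDdeg : divDeg D = Fintype.card W := by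
      simp [divDeg, hD]
    omega
  · refine ⟨by omega, fun E hE hdE => ?_⟩
    refine ⟨D - E, hrefl _, fun v => ?_⟩
    have h1 : E v ≤ divDeg E := single_le_deg hE v
    simp only [Pi.sub_apply, hD]
    omega
end RankFacts

/-! ### Independence number facts -/

section Alpha
variable [Fintype V]

lemma indep_card_le_alpha (G : SimpleGraph V) {S : Finset V} (h : IsIndepSet' G S) :
    S.card ≤ alphaNum G := by
  apply le_csSup
  · refine ⟨Fintype.card V, fun n hn => ?_⟩
    obtain ⟨T, _, hT⟩ := hn
    rw [← hT, ← Finset.card_univ]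
    exact Finset.card_le_card (Finset.subset_univ T)
  · exact ⟨S, h, rfl⟩

lemma alpha_lower [DecidableEq V] (G : SimpleGraph V) [DecidableRel G.Adj] :
    Fintype.card V ≤ G.edgeFinset.card + alphaNum G := by
  classical
  set K : Finset V := G.edgeFinset.image (fun e => (Quot.out e).1) with hK
  set S : Finset V := univ \ K with hSdef
  have hindep : IsIndepSet' G S := by
    intro u hu v hv hadj
    rw [hSdef, Finset.mem_sdiff] at hu hv
    have he : s(u, v) ∈ G.edgeFinset := by
      rw [SimpleGraph.mem_edgeFinset, SimpleGraph.mem_edgeSet]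
      exact hadj
    have hmem : (Quot.out s(u, v)).1 ∈ s(u, v) := Sym2.out_fst_mem _
    rw [Sym2.mem_iff] at hmem
    have hin : (Quot.out s(u, v)).1 ∈ K := by
      rw [hK, Finset.mem_image]
      exact ⟨s(u, v), he, rfl⟩
    rcases hmem with h | h
    · rw [h] at hin; exact hu.2 hin
    · rw [h] at hin; exact hv.2 hin
  have hcard : S.card + K.card = Fintype.card V := by
    rw [hSdef, ← Finset.card_univ]
    exact Finset.card_sdiff_add_card_eq_card (Finset.subset_univ K)
  have h1 : S.card ≤ alphaNum G := indep_card_le_alpha G hindep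
  have h2 : K.card ≤ G.edgeFinset.card := Finset.card_image_le
  omega

end Alpha

/-! ### The structure of `Ĝ` -/

section Hat
variable [Fintype V] [DecidableEq V] (G : SimpleGraph V) [DecidableRel G.Adj]

def nT : HatV G := Sum.inl ()
def nV (v : V) : HatV G := Sum.inr (Sum.inl v)
def nV' (v : V) : HatV G := Sum.inr (Sum.inr (Sum.inl v))
def nTv (v : V) : HatV G := Sum.inr (Sum.inr (Sum.inr (Sum.inl v)))
def nE (p : {p : V × V // G.Adj p.1 p.2}) : HatV G := Sum.inr (Sum.inr (Sum.inr (Sum.inr p)))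
def swP (p : {p : V × V // G.Adj p.1 p.2}) : {p : V × V // G.Adj p.1 p.2} :=
  ⟨(p.1.2, p.1.1), p.2.symm⟩

lemma swP_swP (p : {p : V × V // G.Adj p.1 p.2}) : swP G (swP G p) = p := rfl

lemma hatM_symm (M : ℕ) : ∀ a b : HatV G, hatM G M a b = hatM G M b a := by
  rintro (⟨⟩ | v | v | v | p) (⟨⟩ | w | w | w | q) <;> try rfl
  simp only [hatM]
  apply if_congr _ rfl rfl
  constructor <;> rintro ⟨h1, h2⟩ <;> exact ⟨h2.symm, h1.symm⟩

variable (M : ℕ) (x : HatV G → ℤ)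
  (h1 : ∀ v, x (nV' G v) = x (nV G v))
  (h2 : ∀ v, x (nTv G v) = x (nT G))
  (h3 : ∀ p, x (nE G p) = x (nV G p.1.1))

section
include h2
lemma lap_nT : lap (hatM G M) x (nT G) = 0 := by
  apply lap_eq_zero_at
  rintro (⟨⟩ | w | w | w | q) hw
  · exact absurd rfl hw
  · exact absurd rfl hw
  · exact absurd rfl hw
  · exact h2 w
  · exact absurd rfl hw
end

section
include h1 h3
lemma lap_nV (v : V) : lap (hatM G M) x (nV G v) = 0 := by
  apply lap_eq_zero_at
  rintro (⟨⟩ | w | w | w | q) hw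
  · exact absurd rfl hw
  · exact absurd rfl hw
  · have : v = w := by
      by_contra hc
      exact hw (by simp [hatM, nV, hc])
    rw [← this]
    exact h1 v
  · exact absurd rfl hw
  · have : v = q.1.1 := by
      by_contra hc
      exact hw (by simp [hatM, nV, hc])
    have e := h3 q
    simp only [nE] at e
    rw [e, ← this]
end

section
include h1 h2
lemma lap_nV' (v : V) : lap (hatM G M) x (nV' G v) = 3 * (x (nV G v) - x (nT G)) := by
  rw [lap_apply]
  rw [Fintype.sum_sum_type, Fintype.sum_sum_type, Fintype.sum_sum_type, Fintype.sum_sum_type]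
  simp only [hatM, nT, nV, nV', nTv, nE]
  rw [show ∀ z : Unit → ℤ, (∑ u : Unit, z u) = z () from fun z => by simp]
  push_cast [apply_ite (Nat.cast : ℕ → ℤ)]
  simp only [ite_mul, zero_mul, one_mul, Finset.sum_ite_eq, Finset.sum_ite_eq',
    Finset.mem_univ, if_true, Finset.sum_const_zero]
  have e1 := h1 v; have e2 := h2 v
  simp only [nT, nV, nV', nTv] at e1 e2
  rw [e1, e2]; ring
end

section
include h1 h2
lemma lap_nTv (v : V) : lap (hatM G M) x (nTv G v) = 3 * (x (nT G) - x (nV G v)) := by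
  rw [lap_apply]
  rw [Fintype.sum_sum_type, Fintype.sum_sum_type, Fintype.sum_sum_type, Fintype.sum_sum_type]
  simp only [hatM, nT, nV, nV', nTv, nE]
  rw [show ∀ z : Unit → ℤ, (∑ u : Unit, z u) = z () from fun z => by simp]
  push_cast [apply_ite (Nat.cast : ℕ → ℤ)]
  simp only [ite_mul, zero_mul, one_mul, Finset.sum_ite_eq, Finset.sum_ite_eq',
    Finset.mem_univ, if_true, Finset.sum_const_zero]
  have e1 := h1 v; have e2 := h2 v
  simp only [nT, nV, nV', nTv] at e1 e2
  rw [e1, e2]; ring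
end

section
include h3
lemma lap_nE (p : {p : V × V // G.Adj p.1 p.2}) :
    lap (hatM G M) x (nE G p) = x (nV G p.1.1) - x (nV G p.1.2) := by
  rw [lap_apply]
  rw [Fintype.sum_sum_type, Fintype.sum_sum_type, Fintype.sum_sum_type, Fintype.sum_sum_type]
  simp only [hatM, nT, nV, nV', nTv, nE]
  rw [show ∀ z : Unit → ℤ, (∑ u : Unit, z u) = z () from fun z => by simp]
  push_cast [apply_ite (Nat.cast : ℕ → ℤ)]
  simp only [ite_mul, zero_mul, one_mul, Finset.sum_ite_eq, Finset.sum_ite_eq',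
    Finset.mem_univ, if_true, Finset.sum_const_zero]
  have hsum : ∑ q : {p : V × V // G.Adj p.1 p.2},
      (if p.1.1 = q.1.2 ∧ p.1.2 = q.1.1 then (x (nE G p) - x (nE G q)) else 0)
      = x (nE G p) - x (nE G (swP G p)) := by
    rw [Finset.sum_eq_single (swP G p)]
    · simp [swP]
    · intro q _ hq
      rw [if_neg]
      rintro ⟨ha, hb⟩
      apply hq
      apply Subtype.ext
      apply Prod.ext <;> simp [swP, ha.symm, hb.symm]
    · intro hmem
      exact absurd (Finset.mem_univ _) hmem
  have e1 := h3 p; have e2 := h3 (swP G p)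
  simp only [nE, nV, swP] at hsum e1 e2 ⊢
  rw [hsum, e1, e2]
  simp
end

end Hat

/-- Lower bound: every divisor of positive rank on `Ĝ` has degree at least
`4|V| + |E| + 1 − α(G)`; that is, `dgon(Ĝ) ≥ 4|V| + |E| + 1 − α(G)`. -/
theorem dgon_hat_lower_bound [Fintype V] [DecidableEq V] (G : SimpleGraph V)
    [DecidableRel G.Adj] (hG : G.Connected) :
    (∀ D : HatV G → ℤ, 1 ≤ divRank (hatM G (bigM G)) D →
      4 * (Fintype.card V : ℤ) + (G.edgeFinset.card : ℤ) + 1 - (alphaNum G : ℤ) ≤ divDeg D) ∧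
    4 * (Fintype.card V : ℤ) + (G.edgeFinset.card : ℤ) + 1 - (alphaNum G : ℤ) ≤
      dgon (HatV G) (hatM G (bigM G)) := by
  classical
  have hVne : Nonempty V := hG.nonempty
  have hsym := hatM_symm G (bigM G)
  have halow := alpha_lower G
  have part1 : ∀ D : HatV G → ℤ, 1 ≤ divRank (hatM G (bigM G)) D →
      4 * (Fintype.card V : ℤ) + (G.edgeFinset.card : ℤ) + 1 - (alphaNum G : ℤ) ≤ divDeg D := by
    intro D hD
    obtain ⟨D₀, hD₀eff, hdeg₀, hscen⟩ := rank_facts (hatM G (bigM G)) hsym D hD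
    rw [← hdeg₀]
    by_cases hbig : (bigM G : ℤ) ≤ divDeg D₀
    · have hbm : (bigM G : ℤ) = 3 * (Fintype.card V : ℤ) + 2 * (G.edgeFinset.card : ℤ) + 2 := by
        rw [bigM]; push_cast; ring
      have halow' : (Fintype.card V : ℤ) ≤ (G.edgeFinset.card : ℤ) + (alphaNum G : ℤ) := by
        exact_mod_cast halow
      linarith
    · push_neg at hbig
      have getc : ∀ s : HatV G, ∃ x : HatV G → ℤ,
          (∀ v, x (nV' G v) = x (nV G v)) ∧ (∀ v, x (nTv G v) = x (nT G)) ∧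
          (∀ p, x (nE G p) = x (nV G p.1.1)) ∧
          ∀ a : HatV G, 0 ≤ D₀ a - (if a = s then 1 else 0) - lap (hatM G (bigM G)) x a := by
        intro s
        obtain ⟨x, hx⟩ := hscen s
        have hx' : ∀ a, 0 ≤ D₀ a - (if a = s then 1 else 0) - lap (hatM G (bigM G)) x a := by
          intro a
          have := hx a
          simpa [indVec] using this
        have heffx : Effective (D₀ - lap (hatM G (bigM G)) x) := by
          intro a
          have := hx' a
          simp only [Pi.sub_apply]
          split at this <;> omega
        have key : ∀ a b : HatV G, hatM G (bigM G) a b = bigM G → x a = x b := by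
          intro a b hab
          refine eq_of_lt_deg _ hsym hD₀eff heffx ?_
          rw [hab]; exact hbig
        refine ⟨x, fun v => key _ _ ?_, fun v => key _ _ ?_, fun p => key _ _ ?_, hx'⟩
        · simp [hatM, nV', nV]
        · simp [hatM, nTv, nT]
        · simp [hatM, nE, nV]
      -- the five structural facts
      have f1 : 1 ≤ D₀ (nT G) := by
        obtain ⟨x, c1, c2, c3, hc⟩ := getc (nT G)
        have t := hc (nT G)
        rw [if_pos rfl, lap_nT G (bigM G) x c2] at t
        omega
      have f2 : ∀ v, 1 ≤ D₀ (nV G v) := by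
        intro v
        obtain ⟨x, c1, c2, c3, hc⟩ := getc (nV G v)
        have t := hc (nV G v)
        rw [if_pos rfl, lap_nV G (bigM G) x c1 c3 v] at t
        omega
      have f3 : ∀ v, 1 ≤ D₀ (nV' G v) ∨ 3 ≤ D₀ (nTv G v) := by
        intro v
        obtain ⟨x, c1, c2, c3, hc⟩ := getc (nV' G v)
        have t1 := hc (nV' G v)
        rw [if_pos rfl, lap_nV' G (bigM G) x c1 c2 v] at t1
        have t2 := hc (nTv G v)
        rw [if_neg (by simp [nTv, nV']), lap_nTv G (bigM G) x c1 c2 v] at t2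
        omega
      have f4 : ∀ v, 1 ≤ D₀ (nTv G v) ∨ 3 ≤ D₀ (nV' G v) := by
        intro v
        obtain ⟨x, c1, c2, c3, hc⟩ := getc (nTv G v)
        have t1 := hc (nTv G v)
        rw [if_pos rfl, lap_nTv G (bigM G) x c1 c2 v] at t1
        have t2 := hc (nV' G v)
        rw [if_neg (by simp [nTv, nV']), lap_nV' G (bigM G) x c1 c2 v] at t2
        omega
      have f5 : ∀ p : {p : V × V // G.Adj p.1 p.2}, 1 ≤ D₀ (nE G p) ∨
          (1 ≤ D₀ (nE G (swP G p)) ∧ (3 ≤ D₀ (nV' G p.1.2) ∨ 3 ≤ D₀ (nTv G p.1.1))) := by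
        intro p
        obtain ⟨x, c1, c2, c3, hc⟩ := getc (nE G p)
        have t1 := hc (nE G p)
        rw [if_pos rfl, lap_nE G (bigM G) x c3 p] at t1
        have hnsw : nE G (swP G p) ≠ nE G p := by
          intro hq
          have h' : swP G p = p := by
            simpa [nE] using hq
          have h'' := congrArg (fun r : {p : V × V // G.Adj p.1 p.2} => r.1.1) h'
          simp only [swP] at h''
          exact G.ne_of_adj p.2 h''.symm
        have t2 := hc (nE G (swP G p))
        rw [if_neg hnsw, lap_nE G (bigM G) x c3 (swP G p)] at t2
        have t3 := hc (nV' G p.1.2)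
        rw [if_neg (by simp [nV', nE]), lap_nV' G (bigM G) x c1 c2 p.1.2] at t3
        have t4 := hc (nTv G p.1.1)
        rw [if_neg (by simp [nTv, nE]), lap_nTv G (bigM G) x c1 c2 p.1.1] at t4
        simp only [swP] at t2 ⊢
        omega
      -- degree decomposition
      have hu0 : (∑ u : Unit, D₀ (Sum.inl u)) = D₀ (nT G) := by simp [nT]
      have hsplit : divDeg D₀ = D₀ (nT G) + ((∑ v, D₀ (nV G v)) + ((∑ v, D₀ (nV' G v)) +
          ((∑ v, D₀ (nTv G v)) + (∑ p, D₀ (nE G p))))) := by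
        rw [divDeg, Fintype.sum_sum_type, Fintype.sum_sum_type, Fintype.sum_sum_type,
          Fintype.sum_sum_type, hu0]
        rfl
      have hAsum : (Fintype.card V : ℤ) ≤ ∑ v, D₀ (nV G v) := by
        calc (Fintype.card V : ℤ) = ∑ _v : V, (1 : ℤ) := by simp
          _ ≤ ∑ v, D₀ (nV G v) := Finset.sum_le_sum (fun v _ => f2 v)
      set Hs : Finset V := univ.filter (fun v => 3 ≤ D₀ (nV' G v) ∨ 3 ≤ D₀ (nTv G v)) with hHs
      have hBC : 2 * (Fintype.card V : ℤ) + Hs.card ≤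
          (∑ v, D₀ (nV' G v)) + (∑ v, D₀ (nTv G v)) := by
        have hterm : ∀ v ∈ (univ : Finset V),
            (2 : ℤ) + (if v ∈ Hs then 1 else 0) ≤ D₀ (nV' G v) + D₀ (nTv G v) := by
          intro v _
          have hb := hD₀eff (nV' G v)
          have hc' := hD₀eff (nTv G v)
          by_cases hv : v ∈ Hs
          · rw [if_pos hv]
            rw [hHs, Finset.mem_filter] at hv
            rcases hv.2 with h | h <;> omega
          · rw [if_neg hv]
            rcases f3 v with h | h
            · rcases f4 v with h' | h' <;> omega
            · omega
        have hcount : ∑ v : V, (if v ∈ Hs then (1:ℤ) else 0) = Hs.card := by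
          rw [Finset.sum_ite_mem, Finset.univ_inter, Finset.sum_const, nsmul_eq_mul, mul_one]
        calc 2 * (Fintype.card V : ℤ) + Hs.card
            = ∑ v : V, ((2:ℤ) + (if v ∈ Hs then 1 else 0)) := by
              rw [Finset.sum_add_distrib, hcount, Finset.sum_const, nsmul_eq_mul]
              simp [Finset.card_univ]; ring
          _ ≤ ∑ v : V, (D₀ (nV' G v) + D₀ (nTv G v)) := Finset.sum_le_sum hterm
          _ = _ := Finset.sum_add_distrib
      -- edge counting
      set κ : V ≃ Fin (Fintype.card V) := Fintype.equivFin V with hκ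
      set Can : Finset {p : V × V // G.Adj p.1 p.2} :=
        univ.filter (fun p => κ p.1.1 < κ p.1.2) with hCan
      have hinCan : ∀ p : {p : V × V // G.Adj p.1 p.2},
          ¬ (κ p.1.1 < κ p.1.2) → swP G p ∈ Can := by
        intro p hp
        rw [hCan, Finset.mem_filter]
        refine ⟨Finset.mem_univ _, ?_⟩
        have hne' : κ p.1.2 ≠ κ p.1.1 := fun h => (G.ne_of_adj p.2) (κ.injective h).symm
        have : κ p.1.2 ≤ κ p.1.1 := le_of_not_gt hp
        exact lt_of_le_of_ne this hne'
      have hdart : Fintype.card {p : V × V // G.Adj p.1 p.2} = 2 * G.edgeFinset.card := by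
        have e : {p : V × V // G.Adj p.1 p.2} ≃ G.Dart :=
          ⟨fun p => ⟨p.1, p.2⟩, fun d => ⟨d.toProd, d.adj⟩, fun p => rfl, fun d => rfl⟩
        rw [Fintype.card_congr e, SimpleGraph.dart_card_eq_twice_card_edges]
      have hNCanSum : ∀ F : {p : V × V // G.Adj p.1 p.2} → ℤ,
          ∑ p ∈ univ.filter (fun p => κ p.1.2 ≤ κ p.1.1), F p
            = ∑ p ∈ Can, F (swP G p) := by
        intro F
        apply Finset.sum_nbij' (i := swP G) (j := swP G)
        · intro p hp
          rw [Finset.mem_filter] at hp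
          exact hinCan p (not_lt.mpr hp.2)
        · intro p hp
          rw [hCan, Finset.mem_filter] at hp
          rw [Finset.mem_filter]
          refine ⟨Finset.mem_univ _, ?_⟩
          show κ (swP G p).1.2 ≤ κ (swP G p).1.1
          simp only [swP]
          exact le_of_lt hp.2
        · intro p _; exact swP_swP G p
        · intro p _; exact swP_swP G p
        · intro p _; rfl
      have hCanCard : Can.card = G.edgeFinset.card := by
        have hfil := Finset.card_filter_add_card_filter_not
          (s := (univ : Finset {p : V × V // G.Adj p.1 p.2}))
          (p := fun p => κ p.1.1 < κ p.1.2)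
        simp only [not_lt] at hfil
        rw [← hCan] at hfil
        have hswap : (univ.filter (fun p : {p : V × V // G.Adj p.1 p.2} =>
            κ p.1.2 ≤ κ p.1.1)).card = Can.card := by
          have h1 := hNCanSum (fun _ => (1 : ℤ))
          simpa using h1
        rw [hswap, Finset.card_univ, hdart] at hfil
        omega
      set K0 : Finset {p : V × V // G.Adj p.1 p.2} :=
        Can.filter (fun p => 1 ≤ D₀ (nE G p) ∧ 1 ≤ D₀ (nE G (swP G p))) with hK0
      have hPsum : (G.edgeFinset.card : ℤ) + K0.card ≤ ∑ p, D₀ (nE G p) := by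
        have hPsplit : (∑ p, D₀ (nE G p)) =
            ∑ p ∈ Can, (D₀ (nE G p) + D₀ (nE G (swP G p))) := by
          have hs := Finset.sum_filter_add_sum_filter_not univ
            (fun p : {p : V × V // G.Adj p.1 p.2} => κ p.1.1 < κ p.1.2)
            (fun p => D₀ (nE G p))
          simp only [not_lt] at hs
          rw [← hCan, hNCanSum (fun p => D₀ (nE G p))] at hs
          rw [← hs, ← Finset.sum_add_distrib]
        rw [hPsplit]
        have hterm : ∀ p ∈ Can, (1:ℤ) + (if p ∈ K0 then 1 else 0)
            ≤ D₀ (nE G p) + D₀ (nE G (swP G p)) := by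
          intro p hp
          have e1 := hD₀eff (nE G p)
          have e2 := hD₀eff (nE G (swP G p))
          by_cases hk : p ∈ K0
          · rw [if_pos hk]
            rw [hK0, Finset.mem_filter] at hk
            omega
          · rw [if_neg hk]
            rcases f5 p with h | ⟨h, _⟩ <;> omega
        have hcount : ∑ p ∈ Can, (if p ∈ K0 then (1:ℤ) else 0) = K0.card := by
          rw [Finset.sum_ite_mem]
          rw [Finset.inter_eq_right.mpr (Finset.filter_subset _ _)]
          rw [Finset.sum_const, nsmul_eq_mul, mul_one]
        calc (G.edgeFinset.card : ℤ) + K0.card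
            = ∑ p ∈ Can, ((1:ℤ) + (if p ∈ K0 then 1 else 0)) := by
              rw [Finset.sum_add_distrib, hcount, Finset.sum_const, nsmul_eq_mul, hCanCard]
              push_cast; ring
          _ ≤ _ := Finset.sum_le_sum hterm
      -- vertex cover argument
      set Kset : Finset V := K0.image (fun p => p.1.1) with hKset
      set Sind : Finset V := univ.filter
        (fun v => ¬(3 ≤ D₀ (nV' G v) ∨ 3 ≤ D₀ (nTv G v)) ∧ v ∉ Kset) with hSind
      have hindep : IsIndepSet' G Sind := by
        intro u hu v hv hadj
        rw [hSind, Finset.mem_filter] at hu hv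
        set p : {p : V × V // G.Adj p.1 p.2} := ⟨(u, v), hadj⟩ with hp
        have hPp : 1 ≤ D₀ (nE G p) := by
          rcases f5 p with h | ⟨_, h⟩
          · exact h
          · exfalso
            rcases h with h | h
            · exact hv.2.1 (Or.inl h)
            · exact hu.2.1 (Or.inr h)
        have hPsw : 1 ≤ D₀ (nE G (swP G p)) := by
          rcases f5 (swP G p) with h | ⟨_, h⟩
          · exact h
          · exfalso
            rcases h with h | h
            · exact hu.2.1 (Or.inl h)
            · exact hv.2.1 (Or.inr h)
        have hne' : κ u ≠ κ v := fun h => (G.ne_of_adj hadj) (κ.injective h)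
        rcases lt_or_gt_of_ne hne' with hlt | hlt
        · have hmem : p ∈ K0 := by
            rw [hK0, Finset.mem_filter]
            exact ⟨by rw [hCan, Finset.mem_filter]; exact ⟨Finset.mem_univ _, hlt⟩, hPp, hPsw⟩
          exact hu.2.2 (by rw [hKset, Finset.mem_image]; exact ⟨p, hmem, rfl⟩)
        · have hmem : swP G p ∈ K0 := by
            rw [hK0, Finset.mem_filter]
            refine ⟨by rw [hCan, Finset.mem_filter]; exact ⟨Finset.mem_univ _, hlt⟩, ?_, ?_⟩
            · exact hPsw
            · rw [swP_swP]; exact hPp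
          exact hv.2.2 (by rw [hKset, Finset.mem_image]; exact ⟨swP G p, hmem, rfl⟩)
      have hcov : Fintype.card V ≤ alphaNum G + Hs.card + K0.card := by
        have hsub : (univ : Finset V) ⊆ Sind ∪ Hs ∪ Kset := by
          intro v _
          by_cases hh : 3 ≤ D₀ (nV' G v) ∨ 3 ≤ D₀ (nTv G v)
          · refine Finset.mem_union_left _ (Finset.mem_union_right _ ?_)
            rw [hHs, Finset.mem_filter]; exact ⟨Finset.mem_univ _, hh⟩
          · by_cases hk : v ∈ Kset
            · exact Finset.mem_union_right _ hk
            · refine Finset.mem_union_left _ (Finset.mem_union_left _ ?_)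
              rw [hSind, Finset.mem_filter]; exact ⟨Finset.mem_univ _, hh, hk⟩
        have hc1 : Fintype.card V ≤ Sind.card + Hs.card + Kset.card := by
          calc Fintype.card V = (univ : Finset V).card := Finset.card_univ.symm
            _ ≤ (Sind ∪ Hs ∪ Kset).card := Finset.card_le_card hsub
            _ ≤ (Sind ∪ Hs).card + Kset.card := Finset.card_union_le _ _
            _ ≤ Sind.card + Hs.card + Kset.card := by
                have := Finset.card_union_le Sind Hs
                omega
        have hc2 : Sind.card ≤ alphaNum G := indep_card_le_alpha G hindep
        have hc3 : Kset.card ≤ K0.card := Finset.card_image_le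
        omega
      have hcov' : (Fintype.card V : ℤ) ≤ (alphaNum G : ℤ) + Hs.card + K0.card := by
        exact_mod_cast hcov
      rw [hsplit]
      linarith [hAsum, hBC, hPsum, f1]
  refine ⟨part1, ?_⟩
  apply le_csInf
  · exact ⟨divDeg (fun _ : HatV G => (1:ℤ)),
      ⟨fun _ => 1, rank_one_of_all_ones _ hsym, rfl⟩⟩
  · rintro b ⟨D, hD, rfl⟩
    exact part1 D hD
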